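/- arXiv:0706.0362 — 2 statements merged into one kernel-verified Lean document; each statement's English description precedes it below -/
import Mathlib

section
/- Let G be a compact Hausdorff topological group with normalised Haar measure, let B be a complex Banach space, and let α be a strongly continuous action of G on B by isometric linear automorphisms. Suppose (B_n)_{n≥1} is an increasing sequence of closed linear subspaces of B, each invariant under every α_s, whose union ⋃_n B_n is dense in B. Then the fixed-point space B^α := {b ∈ B : α_s(b) = b for all s ∈ G} equals the closure of ⋃_n (B_n)^α, where (B_n)^α := B_n ∩ B^α. -/
/-!
Averaging an orbit `s ↦ α s b` against normalised Haar measure is a contraction `P` of `B` onto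
the fixed-point space that keeps every closed convex invariant set, in particular every `Bₙ`.
Since `P` is continuous and fixes `B^α` pointwise,
`B^α = P(B^α) ⊆ P(closure ⋃ₙ Bₙ) ⊆ closure ⋃ₙ P(Bₙ) ⊆ closure ⋃ₙ (Bₙ)^α`.
-/

open MeasureTheory Set

theorem subset_closure_of_retraction {X : Type*} [TopologicalSpace X] {P : X → X}
    {F D T : Set X} (hP : Continuous P) (hF : ∀ x ∈ F, P x = x) (hD : MapsTo P D T)
    (hFD : F ⊆ closure D) : F ⊆ closure T := fun x hx =>
  hF x hx ▸ closure_mono hD.image_subset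
    (image_closure_subset_closure_image hP ⟨x, hFD hx, rfl⟩)

theorem exists_isProbabilityMeasure_isMulLeftInvariant (G : Type*) [Group G]
    [TopologicalSpace G] [IsTopologicalGroup G] [CompactSpace G] [MeasurableSpace G]
    [BorelSpace G] :
    ∃ ν : Measure G, IsProbabilityMeasure ν ∧ ν.IsMulLeftInvariant :=
  ⟨Measure.haarMeasure ⊤,
    ⟨by simpa using
      Measure.haarMeasure_self (K₀ := (⊤ : TopologicalSpace.PositiveCompacts G))⟩,
    inferInstance⟩

section OrbitAverage

variable {G B 𝕜 : Type*} [RCLike 𝕜] [MeasurableSpace G] [NormedAddCommGroup B]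
  [NormedSpace 𝕜 B] {ν : Measure G} {α : G → B ≃ₗᵢ[𝕜] B}

theorem integrable_orbit [TopologicalSpace G] [OpensMeasurableSpace G] [CompactSpace G]
    [IsFiniteMeasure ν] {b : B} (hcont : Continuous fun s => α s b) :
    Integrable (fun s => α s b) ν :=
  .of_bound hcont.aestronglyMeasurable_of_compactSpace ‖b‖
    (ae_of_all _ fun s => ((α s).norm_map b).le)

variable [NormedSpace ℝ B]

noncomputable def orbitAverage (ν : Measure G) (α : G → B ≃ₗᵢ[𝕜] B) (b : B) : B :=
  ∫ s, α s b ∂ν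

theorem orbitAverage_eq_self [CompleteSpace B] [IsProbabilityMeasure ν] {b : B}
    (hb : ∀ s, α s b = b) :
    orbitAverage ν α b = b := by
  rw [orbitAverage, funext hb, integral_const, probReal_univ, one_smul]

theorem norm_orbitAverage_le [IsProbabilityMeasure ν] (b : B) :
    ‖orbitAverage ν α b‖ ≤ ‖b‖ := by
  simpa [orbitAverage] using
    norm_integral_le_of_norm_le_const (μ := ν) (ae_of_all _ fun s => ((α s).norm_map b).le)

theorem apply_orbitAverage [Group G] [MeasurableMul G] [ν.IsMulLeftInvariant]
    (hmul : ∀ (s t : G) (b : B), α (s * t) b = α s (α t b)) (t : G) (b : B) :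
    α t (orbitAverage ν α b) = orbitAverage ν α b :=
  calc α t (∫ s, α s b ∂ν) = ∫ s, α t (α s b) ∂ν :=
        ((α t).toContinuousLinearEquiv.integral_comp_comm _).symm
    _ = ∫ s, α (t * s) b ∂ν := by simp only [hmul]
    _ = ∫ s, α s b ∂ν := integral_mul_left_eq_self (fun s => α s b) t

variable [TopologicalSpace G] [OpensMeasurableSpace G] [CompactSpace G]

theorem orbitAverage_sub [IsFiniteMeasure ν] (hcont : ∀ b : B, Continuous fun s => α s b)
    (b c : B) : orbitAverage ν α (b - c) = orbitAverage ν α b - orbitAverage ν α c := by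
  simp only [orbitAverage, map_sub]
  exact integral_sub (integrable_orbit (hcont b)) (integrable_orbit (hcont c))

theorem lipschitzWith_orbitAverage [IsProbabilityMeasure ν]
    (hcont : ∀ b : B, Continuous fun s => α s b) : LipschitzWith 1 (orbitAverage ν α) :=
  .of_dist_le_mul fun b c => by
    simpa [dist_eq_norm, ← orbitAverage_sub hcont] using norm_orbitAverage_le (b - c)

theorem orbitAverage_mem [CompleteSpace B] [IsProbabilityMeasure ν] {S : Set B} (hS : Convex ℝ S)
    (hS' : IsClosed S) {b : B} (hcont : Continuous fun s => α s b) (hb : ∀ s, α s b ∈ S) :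
    orbitAverage ν α b ∈ S :=
  hS.integral_mem hS' (ae_of_all _ hb) (integrable_orbit hcont)

end OrbitAverage

theorem stmt2_general (G : Type) [Group G] [TopologicalSpace G] [IsTopologicalGroup G]
    [CompactSpace G]
    (B : Type) [NormedAddCommGroup B] [NormedSpace ℂ B] [CompleteSpace B]
    (α : G → B ≃ₗᵢ[ℂ] B)
    (hmul : ∀ (s t : G) (b : B), α (s * t) b = α s (α t b))
    (hcont : ∀ b : B, Continuous fun s => α s b)
    (Bn : ℕ → Submodule ℂ B)
    (hclosed : ∀ n, IsClosed (Bn n : Set B))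
    (hinv : ∀ (n : ℕ) (s : G) (b : B), b ∈ Bn n → α s b ∈ Bn n)
    (hdense : Dense (⋃ n, (Bn n : Set B))) :
    {b : B | ∀ s : G, α s b = b} =
      closure (⋃ n, ((Bn n : Set B) ∩ {b : B | ∀ s : G, α s b = b})) := by
  borelize G
  obtain ⟨ν, _, _⟩ := exists_isProbabilityMeasure_isMulLeftInvariant G
  have hfixed_closed : IsClosed {b : B | ∀ s : G, α s b = b} := by
    simpa only [ofPred_forall] using
      isClosed_iInter fun s => isClosed_eq (α s).continuous continuous_id'
  refine subset_antisymm ?_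
    (closure_minimal (iUnion_subset fun n => inter_subset_right) hfixed_closed)
  refine subset_closure_of_retraction (lipschitzWith_orbitAverage (ν := ν) hcont).continuous
    (fun b hb => orbitAverage_eq_self hb) ?_ (by rw [hdense.closure_eq]; exact subset_univ _)
  intro b hb
  obtain ⟨n, hbn⟩ := mem_iUnion.1 hb
  have hconv : Convex ℝ (Bn n : Set B) := ((Bn n).restrictScalars ℝ).convex
  exact mem_iUnion.2 ⟨n, orbitAverage_mem hconv (hclosed n) (hcont b) (fun s => hinv n s b hbn),
    fun t => apply_orbitAverage hmul t b⟩

/-- Let `G` be a compact Hausdorff group, `B` a complex Banach space and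
`α` a strongly continuous action of `G` on `B` by isometric linear automorphisms.  If
`(Bₙ)` is an increasing sequence of closed, `α`-invariant linear subspaces of `B` whose
union is dense in `B`, then the fixed-point space `B^α` is the closure of `⋃ₙ (Bₙ)^α`,
where `(Bₙ)^α = Bₙ ∩ B^α`. -/
theorem stmt2 (G : Type) [Group G] [TopologicalSpace G] [IsTopologicalGroup G]
    [CompactSpace G] [T2Space G]
    (B : Type) [NormedAddCommGroup B] [NormedSpace ℂ B] [CompleteSpace B]
    (α : G → B ≃ₗᵢ[ℂ] B)
    (hmul : ∀ (s t : G) (b : B), α (s * t) b = α s (α t b))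
    (hone : ∀ b : B, α 1 b = b)
    (hcont : ∀ b : B, Continuous fun s => α s b)
    (Bn : ℕ → Submodule ℂ B)
    (hclosed : ∀ n, IsClosed (Bn n : Set B))
    (hmono : ∀ n, Bn n ≤ Bn (n + 1))
    (hinv : ∀ (n : ℕ) (s : G) (b : B), b ∈ Bn n → α s b ∈ Bn n)
    (hdense : Dense (⋃ n, (Bn n : Set B))) :
    {b : B | ∀ s : G, α s b = b} =
      closure (⋃ n, ((Bn n : Set B) ∩ {b : B | ∀ s : G, α s b = b})) :=
  stmt2_general G B α hmul hcont Bn hclosed hinv hdense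
end

section
/- Let Λ be a k-graph with no sources. Then for every vertex v ∈ Λ^0 the set vΛ^∞ of infinite paths with range v is nonempty. -/
open CategoryTheory

attribute [local instance 2000] Preorder.smallCategory

/-- A `k`-graph: a small category `Λ` equipped with a degree functor `d : Λ → ℕᵏ`
satisfying the unique factorisation property.  Morphisms point from the range of a path
to its source, so that `f ≫ g` corresponds to the composition `fg` of paths in the
`k`-graph literature (with `r (f ≫ g) = r f` and `s (f ≫ g) = s g`). -/
structure KGraph (k : ℕ) (Λ : Type) [SmallCategory Λ] : Type where
  deg : ∀ {a b : Λ}, (a ⟶ b) → Fin k → ℕ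
  deg_id : ∀ a : Λ, deg (𝟙 a) = 0
  deg_comp : ∀ {a b c : Λ} (f : a ⟶ b) (g : b ⟶ c), deg (f ≫ g) = deg f + deg g
  factor : ∀ {a b : Λ} (f : a ⟶ b) (m n : Fin k → ℕ), deg f = m + n →
    ∃! t : Σ c : Λ, (a ⟶ c) × (c ⟶ b),
      deg t.2.1 = m ∧ deg t.2.2 = n ∧ t.2.1 ≫ t.2.2 = f

/-- An infinite path in a `k`-graph: a degree-preserving functor `Ω_k → Λ`, where `Ω_k`
is realised as the preorder category on `ℕᵏ = Fin k → ℕ`; the morphism `(p, q)` (for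
`p ≤ q`) is `homOfLE h : p ⟶ q` and must be sent to a path of degree `q - p`.
The range of the path is `P.obj 0`. -/
structure InfPath {k : ℕ} {Λ : Type} [SmallCategory Λ] (KG : KGraph k Λ) : Type where
  P : (Fin k → ℕ) ⥤ Λ
  deg_eq : ∀ {p q : Fin k → ℕ} (h : p ≤ q), KG.deg (P.map (homOfLE h)) = q - p

/-- Translation by `n` on `ℕᵏ`, as a functor. -/
def transFunctor (k : ℕ) (n : Fin k → ℕ) : (Fin k → ℕ) ⥤ (Fin k → ℕ) where
  obj p := p + n
  map f := homOfLE (add_le_add (leOfHom f) (le_refl n))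
  map_id _ := rfl
  map_comp _ _ := rfl

/-- The shift `σⁿ x` of an infinite path `x`, satisfying `σⁿ x (p, q) = x (p + n, q + n)`. -/
def InfPath.shift {k : ℕ} {Λ : Type} [SmallCategory Λ] {KG : KGraph k Λ}
    (x : InfPath KG) (n : Fin k → ℕ) : InfPath KG where
  P := transFunctor k n ⋙ x.P
  deg_eq {p q} h := by
    have h1 : (transFunctor k n ⋙ x.P).map (homOfLE h)
        = x.P.map (homOfLE (add_le_add h (le_refl n))) := rfl
    rw [h1]
    show KG.deg (x.P.map (homOfLE (add_le_add h (le_refl n)))) = q - p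
    rw [x.deg_eq]
    funext i
    simp only [Pi.sub_apply, Pi.add_apply]
    omega

/-- `vΛⁿ ≠ ∅` for every vertex `v` and every `n ∈ ℕᵏ`. -/
def NoSources {k : ℕ} {Λ : Type} [SmallCategory Λ] (KG : KGraph k Λ) : Prop :=
  ∀ (v : Λ) (n : Fin k → ℕ), ∃ (b : Λ) (f : v ⟶ b), KG.deg f = n

/-!
Since `Λ` has no sources, one can extend the trivial path at `v` step by step to a chain
`λ₀ ≺ λ₁ ≺ ⋯` with `d(λₙ) = (n, …, n)`. The infinite path sends `(0, p)` to the initial segment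
of degree `p` of any `λₙ` long enough; by unique factorisation this does not depend on `n`,
these segments extend one another, and since every path is left cancellable the connecting
segments assemble into a functor.
-/

section

variable {k : ℕ} {Λ : Type} [SmallCategory Λ]

namespace KGraph

theorem factor_eq (KG : KGraph k Λ) {a b c c' : Λ} {f : a ⟶ c} {g : c ⟶ b} {f' : a ⟶ c'}
    {g' : c' ⟶ b} (h : f ≫ g = f' ≫ g') (hd : KG.deg f = KG.deg f') :
    (⟨c, f, g⟩ : Σ c : Λ, (a ⟶ c) × (c ⟶ b)) = ⟨c', f', g'⟩ := by
  have hg : KG.deg g = KG.deg g' := by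
    have := KG.deg_comp f' g'
    rw [← h, KG.deg_comp, hd] at this
    exact add_left_cancel this
  exact (KG.factor (f ≫ g) _ _ (KG.deg_comp f g)).unique ⟨rfl, rfl, rfl⟩
    ⟨hd.symm, hg.symm, h.symm⟩

theorem epi (KG : KGraph k Λ) {a b : Λ} (f : a ⟶ b) : Epi f where
  left_cancellation g g' h := by
    have := (Sigma.mk.inj_iff.mp (KG.factor_eq h rfl)).2
    exact congrArg Prod.snd (eq_of_heq this)

theorem eq_of_deg_eq_zero (KG : KGraph k Λ) {a b : Λ} {f : a ⟶ b} (hf : KG.deg f = 0) :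
    a = b :=
  congrArg Sigma.fst
    (KG.factor_eq ((Category.id_comp f).trans (Category.comp_id f).symm) (KG.deg_id a ▸ hf.symm))

theorem exists_factor_of_le (KG : KGraph k Λ) {a b : Λ} (f : a ⟶ b) {p : Fin k → ℕ}
    (hp : p ≤ KG.deg f) : ∃ (c : Λ) (g : a ⟶ c) (h : c ⟶ b), KG.deg g = p ∧ g ≫ h = f := by
  obtain ⟨⟨c, g, h⟩, ⟨hg, -, hgh⟩, -⟩ := KG.factor f p _ (add_tsub_cancel_of_le hp).symm
  exact ⟨c, g, h, hg, hgh⟩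

theorem exists_comp_eq_of_comp_eq (KG : KGraph k Λ) {a b c c' : Λ} {f : a ⟶ c} {g : c ⟶ b}
    {f' : a ⟶ c'} {g' : c' ⟶ b} (h : f ≫ g = f' ≫ g') (hle : KG.deg f ≤ KG.deg f') :
    ∃ m : c ⟶ c', f ≫ m = f' := by
  obtain ⟨d, u, w, hu, rfl⟩ := KG.exists_factor_of_le f' hle
  have hfu := Sigma.mk.inj_iff.mp
    (KG.factor_eq (g' := w ≫ g') (h.trans (Category.assoc u w g')) hu.symm)
  obtain rfl := hfu.1
  obtain rfl := congrArg Prod.fst (eq_of_heq hfu.2)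
  exact ⟨w, rfl⟩

end KGraph

noncomputable def InfPath.ofPrefixes (KG : KGraph k Λ) {v : Λ}
    (X : (Fin k → ℕ) → Σ c : Λ, v ⟶ c) (hdeg : ∀ p, KG.deg (X p).2 = p)
    (hext : ∀ {p q : Fin k → ℕ}, p ≤ q → ∃ g : (X p).1 ⟶ (X q).1, (X p).2 ≫ g = (X q).2) :
    InfPath KG where
  P :=
    { obj p := (X p).1
      map f := (hext (leOfHom f)).choose
      map_id p := (KG.epi (X p).2).left_cancellation _ _ <| by
        rw [(hext (leOfHom (𝟙 p))).choose_spec, Category.comp_id]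
      map_comp {p _ _} f g := (KG.epi (X p).2).left_cancellation _ _ <| by
        rw [← Category.assoc, (hext (leOfHom f)).choose_spec, (hext (leOfHom g)).choose_spec,
          (hext (leOfHom (f ≫ g))).choose_spec] }
  deg_eq {p q} h := by
    have hq := KG.deg_comp (X p).2 (hext h).choose
    rw [(hext h).choose_spec, hdeg, hdeg, add_comm] at hq
    exact eq_tsub_of_add_eq hq.symm

namespace NoSources

variable {KG : KGraph k Λ}

theorem exists_chain (hns : NoSources KG) (v : Λ) :
    ∃ L : ℕ → Σ c : Λ, v ⟶ c, (∀ n, KG.deg (L n).2 = n) ∧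
      ∀ {m n}, m ≤ n → ∃ g : (L m).1 ⟶ (L n).1, (L m).2 ≫ g = (L n).2 := by
  choose w e he using hns
  let L : ℕ → Σ c : Λ, v ⟶ c :=
    fun n => Nat.rec ⟨v, 𝟙 v⟩ (fun _ l => ⟨w l.1 1, l.2 ≫ e l.1 1⟩) n
  refine ⟨L, fun n => ?_, fun {m} n hmn => ?_⟩
  · induction n with
    | zero => exact (KG.deg_id v).trans Nat.cast_zero.symm
    | succ n ih =>
      change KG.deg ((L n).2 ≫ e (L n).1 1) = _
      rw [KG.deg_comp, ih, he, Nat.cast_succ]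
  · induction n, hmn using Nat.le_induction with
    | base => exact ⟨𝟙 _, Category.comp_id _⟩
    | succ n _ ih =>
      obtain ⟨g, hg⟩ := ih
      exact ⟨g ≫ e (L n).1 1, by rw [← Category.assoc, hg]⟩

theorem exists_prefixes (hns : NoSources KG) (v : Λ) :
    ∃ X : (Fin k → ℕ) → Σ c : Λ, v ⟶ c, (∀ p, KG.deg (X p).2 = p) ∧
      ∀ {p q : Fin k → ℕ}, p ≤ q → ∃ g : (X p).1 ⟶ (X q).1, (X p).2 ≫ g = (X q).2 := by
  obtain ⟨L, hLdeg, hLext⟩ := hns.exists_chain v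
  have hle (p : Fin k → ℕ) : p ≤ KG.deg (L (∑ i, p i)).2 := fun i => by
    rw [hLdeg, Pi.natCast_apply]
    exact Finset.single_le_sum (fun j _ => Nat.zero_le (p j)) (Finset.mem_univ i)
  choose c g h hg hgh using fun p => KG.exists_factor_of_le _ (hle p)
  refine ⟨fun p => ⟨c p, g p⟩, hg, fun {p q} hpq => ?_⟩
  obtain ⟨a, ha⟩ := hLext (Nat.le_add_right (∑ i, p i) (∑ i, q i))
  obtain ⟨b, hb⟩ := hLext (Nat.le_add_left (∑ i, q i) (∑ i, p i))
  refine KG.exists_comp_eq_of_comp_eq (g := h p ≫ a) (g' := h q ≫ b) ?_ (by rwa [hg, hg])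
  rw [← Category.assoc, ← Category.assoc, hgh, hgh, ha, hb]

end NoSources

end

/-- If a `k`-graph `Λ` has no sources then `vΛ^∞ ≠ ∅` for every vertex
`v`: there is an infinite path with range `v`. -/
theorem stmt5 {k : ℕ} {Λ : Type} [SmallCategory Λ] (KG : KGraph k Λ)
    (hns : NoSources KG) (v : Λ) :
    ∃ x : InfPath KG, x.P.obj 0 = v := by
  obtain ⟨X, hdeg, hext⟩ := hns.exists_prefixes v
  exact ⟨InfPath.ofPrefixes KG X hdeg hext, (KG.eq_of_deg_eq_zero (hdeg 0)).symm⟩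
end
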